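/- arXiv:2008.03744 — 8 statements merged into one kernel-verified Lean document; each statement's English description precedes it below -/
import Mathlib

section
/- Let p > 1 and let g : (0,∞) → (0,∞) be a nondecreasing function satisfying g(w)/g(v) ≥ (w/v)^(p−1) for all w ≥ v > 0. Then for every ε ∈ (0,1] and all a > 0, b > 0 one has g(a)·b ≤ ε⁻¹·g(a)·a + ε^(p−1)·g(b)·b. -/
/-! Condition (g₂) applied to `ε b ≤ b` gives `g (ε b) ≤ ε ^ (p - 1) g b`. If `a ≤ ε b`, monotonicity
then bounds `g a * b` by the second term; otherwise `b < ε⁻¹ a` and it is bounded by the first. -/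

lemma le_rpow_mul_of_rpow_div_le_div {g : ℝ → ℝ} {q t b : ℝ} (ht : 0 < t) (ht1 : t ≤ 1)
    (hb : 0 < b) (hgtb : 0 < g (t * b))
    (hg : ∀ v w : ℝ, 0 < v → v ≤ w → (w / v) ^ q ≤ g w / g v) :
    g (t * b) ≤ t ^ q * g b := by
  have hratio : (t ^ q)⁻¹ ≤ g b / g (t * b) := by
    have h := hg (t * b) b (mul_pos ht hb) (mul_le_of_le_one_left hb.le ht1)
    rwa [div_mul_cancel_right₀ hb.ne', Real.inv_rpow ht.le] at h
  rwa [le_div_iff₀ hgtb, inv_mul_le_iff₀ (Real.rpow_pos_of_pos ht q)] at hratio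

theorem young_type_inequality_two_general
    (p : ℝ)
    (g : ℝ → ℝ)
    (hg_pos : ∀ v, 0 < v → 0 < g v)
    (hg_mono : MonotoneOn g (Set.Ioi 0))
    (hg2 : ∀ v w : ℝ, 0 < v → v ≤ w → (w / v) ^ (p - 1) ≤ g w / g v) :
    ∀ ε : ℝ, 0 < ε → ε ≤ 1 → ∀ a > (0:ℝ), ∀ b > (0:ℝ),
      g a * b ≤ ε⁻¹ * g a * a + ε ^ (p - 1) * g b * b := by
  intro ε hε hε1 a ha b hb
  have hfirst : 0 ≤ ε⁻¹ * g a * a := by have := hg_pos a ha; positivity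
  have hsecond : 0 ≤ ε ^ (p - 1) * g b * b := by have := hg_pos b hb; positivity
  rcases le_or_gt a (ε * b) with hab | hba
  · have hεb : 0 < ε * b := mul_pos hε hb
    have hga : g a ≤ ε ^ (p - 1) * g b :=
      (hg_mono ha hεb hab).trans (le_rpow_mul_of_rpow_div_le_div hε hε1 hb (hg_pos _ hεb) hg2)
    linarith [mul_le_mul_of_nonneg_right hga hb.le]
  · have hb_lt : b < ε⁻¹ * a := by rwa [lt_inv_mul_iff₀ hε]
    linarith [mul_le_mul_of_nonneg_left hb_lt.le (hg_pos a ha).le]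

/-- Young-type inequality for a nondecreasing function `g : (0,∞) → (0,∞)`
satisfying the coercivity condition (g₂): `g(w)/g(v) ≥ (w/v)^(p−1)` for `w ≥ v > 0`.
Then for every `ε ∈ (0,1]` and `a, b > 0`, `g(a)·b ≤ ε⁻¹·g(a)·a + ε^(p−1)·g(b)·b`. -/
theorem young_type_inequality_two
    (p : ℝ) (hp : 1 < p)
    (g : ℝ → ℝ)
    (hg_pos : ∀ v, 0 < v → 0 < g v)
    (hg_mono : MonotoneOn g (Set.Ioi 0))
    (hg2 : ∀ v w : ℝ, 0 < v → v ≤ w → (w / v) ^ (p - 1) ≤ g w / g v) :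
    ∀ ε : ℝ, 0 < ε → ε ≤ 1 → ∀ a > (0:ℝ), ∀ b > (0:ℝ),
      g a * b ≤ ε⁻¹ * g a * a + ε ^ (p - 1) * g b * b :=
  young_type_inequality_two_general p g hg_pos hg_mono hg2
end

section
/- Let c₁ > 0, q > 1, b₀ ≥ 0, and let g : [0,∞) → [0,∞) be continuous and nondecreasing with g(v) > 0 for v > 0, satisfying g(w) ≤ c₁·(w/v)^(q−1)·g(v) for all w ≥ v > 0 with v ≥ b₀. Define 𝒢(w) := ∫₀^w g(v) dv. Then 𝒢(w) ≥ ((1 − 2^(−q))/(c₁·q))·g(w)·w for all w ≥ 2(1 + b₀). -/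
open intervalIntegral

/-! On `[w/2, w]` the growth condition, read backwards from `w`, gives
`g v ≥ (g w / c₁) (v/w)^(q-1)`; integrating this power over `[w/2, w]` produces the factor
`(1 - 2^(-q)) w / q`, and the integral over `[0, w/2]` is nonnegative. -/

theorem integral_div_rpow_half {w q : ℝ} (hw : 0 < w) (hq : q ≠ 0) :
    ∫ v in w / 2..w, (v / w) ^ (q - 1) = (1 - 2 ^ (-q)) / q * w := by
  have hhalf : (0 : ℝ) ∉ Set.uIcc (1 / 2) 1 := by
    rw [Set.uIcc_of_le (by norm_num)]
    norm_num
  have hhalf_div : w / 2 / w = 1 / 2 := by field_simp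
  rw [integral_comp_div (fun v => v ^ (q - 1)) hw.ne', hhalf_div, div_self hw.ne',
    integral_rpow (Or.inr ⟨by contrapose! hq; linarith, hhalf⟩), sub_add_cancel, Real.one_rpow,
    one_div, Real.inv_rpow zero_le_two, ← Real.rpow_neg zero_le_two, smul_eq_mul, mul_comm]

theorem div_mul_rpow_le_of_le_mul_rpow {c q v w a b : ℝ} (hc : 0 < c) (hv : 0 < v) (hw : 0 < w)
    (h : b ≤ c * (w / v) ^ (q - 1) * a) : b / c * (v / w) ^ (q - 1) ≤ a := by
  have hinv : (w / v) ^ (q - 1) * (v / w) ^ (q - 1) = 1 := by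
    rw [← Real.mul_rpow (div_pos hw hv).le (div_pos hv hw).le, div_mul_div_comm, mul_comm w v,
      div_self (by positivity), Real.one_rpow]
  calc b / c * (v / w) ^ (q - 1)
      ≤ c * (w / v) ^ (q - 1) * a / c * (v / w) ^ (q - 1) := by gcongr
    _ = a := by field_simp; rw [mul_comm _ a, mul_assoc, hinv, mul_one]

theorem primitive_lower_bound_general
    (c₁ q b₀ : ℝ) (hc₁ : 0 < c₁) (hq : 1 < q) (hb₀ : 0 ≤ b₀)
    (g : ℝ → ℝ)
    (hg_cont : ContinuousOn g (Set.Ici 0))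
    (hg_nonneg : ∀ v, 0 ≤ v → 0 ≤ g v)
    (hg1 : ∀ v w : ℝ, 0 < v → b₀ ≤ v → v ≤ w → g w ≤ c₁ * (w / v) ^ (q - 1) * g v) :
    ∀ w : ℝ, 2 * (1 + b₀) ≤ w →
      ((1 - 2 ^ (-q)) / (c₁ * q)) * (g w * w) ≤ ∫ v in (0:ℝ)..w, g v := by
  intro w hw
  have hw₀ : 0 < w := by linarith
  have hint : ∀ a ≥ (0 : ℝ), IntervalIntegrable g MeasureTheory.volume a w := fun a ha =>
    (hg_cont.mono fun x hx => (le_min ha hw₀.le).trans hx.1).intervalIntegrable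
  have hbound : ∀ v ∈ Set.Icc (w / 2) w, g w / c₁ * (v / w) ^ (q - 1) ≤ g v := fun v hv =>
    div_mul_rpow_le_of_le_mul_rpow hc₁ (by linarith [hv.1]) hw₀
      (hg1 v w (by linarith [hv.1]) (by linarith [hv.1]) hv.2)
  calc ((1 - 2 ^ (-q)) / (c₁ * q)) * (g w * w)
      = ∫ v in w / 2..w, g w / c₁ * (v / w) ^ (q - 1) := by
        rw [integral_const_mul, integral_div_rpow_half hw₀ (by positivity)]
        field_simp
    _ ≤ ∫ v in w / 2..w, g v :=
        integral_mono_on (by linarith)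
          ((continuous_const.mul ((continuous_id.div_const w).rpow_const
            fun _ => Or.inr (by linarith))).intervalIntegrable _ _) (hint _ (by linarith)) hbound
    _ ≤ ∫ v in (0:ℝ)..w, g v :=
        integral_mono_interval (by linarith) (by linarith) le_rfl
          ((MeasureTheory.ae_restrict_iff' measurableSet_Ioc).2
            (Filter.Eventually.of_forall fun v hv => hg_nonneg v hv.1.le))
          (hint 0 le_rfl)

/-- Under the growth condition (g₁): `g(w) ≤ c₁·(w/v)^(q−1)·g(v)` for all `w ≥ v ≥ b₀`
(`v > 0`), the primitive `𝒢(w) = ∫₀^w g(v) dv` satisfies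
`𝒢(w) ≥ ((1 − 2^(−q))/(c₁·q))·g(w)·w` for all `w ≥ 2(1 + b₀)`. -/
theorem primitive_lower_bound
    (c₁ q b₀ : ℝ) (hc₁ : 0 < c₁) (hq : 1 < q) (hb₀ : 0 ≤ b₀)
    (g : ℝ → ℝ)
    (hg_cont : ContinuousOn g (Set.Ici 0))
    (hg_nonneg : ∀ v, 0 ≤ v → 0 ≤ g v)
    (hg_mono : MonotoneOn g (Set.Ici 0))
    (hg_pos : ∀ v, 0 < v → 0 < g v)
    (hg1 : ∀ v w : ℝ, 0 < v → b₀ ≤ v → v ≤ w → g w ≤ c₁ * (w / v) ^ (q - 1) * g v) :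
    ∀ w : ℝ, 2 * (1 + b₀) ≤ w →
      ((1 - 2 ^ (-q)) / (c₁ * q)) * (g w * w) ≤ ∫ v in (0:ℝ)..w, g v :=
  primitive_lower_bound_general c₁ q b₀ hc₁ hq hb₀ g hg_cont hg_nonneg hg1
end

section
/- Let n ≥ 1, let Ω ⊂ ℝⁿ be a bounded open set, and let r* ∈ (0,1). Let λ : (0,r*) → [0,∞) be continuous and nonincreasing such that r ↦ λ(r)/|ln r| is nondecreasing on (0,r*) and λ(r)/|ln r| → 0 as r → 0⁺. Let 1 < p < q and let p(·), q(·) : Ω → ℝ satisfy p < p(x) ≤ q(x) < q for all x ∈ Ω and |p(x)−p(y)| + |q(x)−q(y)| ≤ λ(|x−y|)/|ln|x−y|| for all x, y ∈ Ω with 0 < |x−y| < r*. Define g(x,v) := v^(p(x)−1) + v^(q(x)−1). Then for every K > 0 there exist r₀ ∈ (0, r*/2) and c₂ > 0 such that for every x₀ ∈ ℝⁿ, every r ∈ (0, r₀] with the ball B_{8r}(x₀) contained in Ω, all x₁, x₂ ∈ B_r(x₀), and every v with r ≤ v ≤ K: g(x₁, v/r) ≤ c₂·e^{λ(r)}·g(x₂,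 v/r). -/
lemma aux_rpow (t T A e₁ e₂ a : ℝ) (ht : 1 ≤ t) (htT : t ≤ T)
    (hΔ : |e₁ - e₂| ≤ a) (hTa : T ^ a ≤ A) : t ^ e₁ ≤ A * t ^ e₂ := by
  have ht0 : (0:ℝ) < t := lt_of_lt_of_le one_pos ht
  have h1 : t ^ e₁ = t ^ e₂ * t ^ (e₁ - e₂) := by
    rw [← Real.rpow_add ht0]; ring_nf
  have h2 : t ^ (e₁ - e₂) ≤ t ^ |e₁ - e₂| :=
    Real.rpow_le_rpow_of_exponent_le ht (le_abs_self _)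
  have h3 : t ^ |e₁ - e₂| ≤ T ^ |e₁ - e₂| :=
    Real.rpow_le_rpow ht0.le htT (abs_nonneg _)
  have h4 : T ^ |e₁ - e₂| ≤ T ^ a :=
    Real.rpow_le_rpow_of_exponent_le (le_trans ht htT) hΔ
  have h5 : (0:ℝ) ≤ t ^ e₂ := (Real.rpow_pos_of_pos ht0 _).le
  calc t ^ e₁ = t ^ e₂ * t ^ (e₁ - e₂) := h1
    _ ≤ t ^ e₂ * A := mul_le_mul_of_nonneg_left (h2.trans (h3.trans (h4.trans hTa))) h5
    _ = A * t ^ e₂ := mul_comm _ _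

/-- The non-logarithmic continuity condition (g₃) for the variable-exponent
double-power model `g(x,v) = v^(p(x)−1) + v^(q(x)−1)`, under the non-log
modulus-of-continuity assumptions on `p(·)` and `q(·)`. -/
theorem condition_g3_variable_exponent_double_power
    (n : ℕ) (hn : 1 ≤ n)
    (Ω : Set (EuclideanSpace ℝ (Fin n)))
    (hΩ_open : IsOpen Ω) (hΩ_bdd : Bornology.IsBounded Ω)
    (rstar : ℝ) (hrstar : rstar ∈ Set.Ioo (0:ℝ) 1)
    (lam : ℝ → ℝ)
    (hlam_cont : ContinuousOn lam (Set.Ioo 0 rstar))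
    (hlam_nonneg : ∀ r ∈ Set.Ioo (0:ℝ) rstar, 0 ≤ lam r)
    (hlam_anti : AntitoneOn lam (Set.Ioo 0 rstar))
    (hlam_mono : MonotoneOn (fun r => lam r / |Real.log r|) (Set.Ioo 0 rstar))
    (hlam_lim : Filter.Tendsto (fun r => lam r / |Real.log r|)
      (nhdsWithin 0 (Set.Ioi 0)) (nhds 0))
    (p q : ℝ) (hp : 1 < p) (hpq : p < q)
    (pe qe : EuclideanSpace ℝ (Fin n) → ℝ)
    (hrange : ∀ x ∈ Ω, p < pe x ∧ pe x ≤ qe x ∧ qe x < q)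
    (hholder : ∀ x ∈ Ω, ∀ y ∈ Ω, 0 < dist x y → dist x y < rstar →
      |pe x - pe y| + |qe x - qe y| ≤ lam (dist x y) / |Real.log (dist x y)|) :
    ∀ K > (0:ℝ), ∃ r₀ : ℝ, 0 < r₀ ∧ r₀ < rstar / 2 ∧ ∃ c₂ > (0:ℝ),
      ∀ x₀ : EuclideanSpace ℝ (Fin n), ∀ r : ℝ, 0 < r → r ≤ r₀ →
        Metric.ball x₀ (8 * r) ⊆ Ω →
        ∀ x₁ ∈ Metric.ball x₀ r, ∀ x₂ ∈ Metric.ball x₀ r,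
          ∀ v : ℝ, r ≤ v → v ≤ K →
            (v / r) ^ (pe x₁ - 1) + (v / r) ^ (qe x₁ - 1) ≤
              c₂ * Real.exp (lam r) *
                ((v / r) ^ (pe x₂ - 1) + (v / r) ^ (qe x₂ - 1)) := by
  intro K hK
  obtain ⟨hrs0, hrs1⟩ := hrstar
  -- get δ from the limit hypothesis
  have hev : ∀ᶠ r in nhdsWithin 0 (Set.Ioi 0), lam r / |Real.log r| < 1/2 :=
    hlam_lim.eventually_lt_const (by norm_num)
  obtain ⟨δ, hδ0, hδ⟩ := Metric.mem_nhdsWithin_iff.mp hev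
  set r₀ : ℝ := min (rstar/4) (min (1/4) (δ/2)) with hr₀def
  have hr₀pos : 0 < r₀ := by
    simp only [hr₀def, lt_min_iff]
    exact ⟨by linarith, by norm_num, by linarith⟩
  have hr₀star : r₀ < rstar / 2 := lt_of_le_of_lt (min_le_left _ _) (by linarith)
  refine ⟨r₀, hr₀pos, hr₀star, Real.exp |Real.log (2*K)|, Real.exp_pos _, ?_⟩
  intro x₀ r hr hrr₀ hball x₁ hx₁ x₂ hx₂ v hrv hvK
  -- basic facts about r
  have hr14 : r ≤ 1/4 := hrr₀.trans ((min_le_right _ _).trans (min_le_left _ _))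
  have hrδ : r < δ := lt_of_le_of_lt (hrr₀.trans ((min_le_right _ _).trans (min_le_right _ _))) (by linarith)
  have h2rstar : 2*r < rstar := by
    have := hrr₀.trans (min_le_left _ _); linarith
  have hrmem : r ∈ Set.Ioo (0:ℝ) rstar := ⟨hr, by linarith⟩
  have h2rmem : (2*r) ∈ Set.Ioo (0:ℝ) rstar := ⟨by linarith, h2rstar⟩
  -- log facts
  have hlog2r_neg : Real.log (2*r) < 0 :=
    Real.log_neg (by linarith) (by linarith)
  have hlogr_neg : Real.log r < 0 := Real.log_neg hr (by linarith)
  set L : ℝ := |Real.log (2*r)| with hLdef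
  have hL : L = -Real.log (2*r) := abs_of_neg hlog2r_neg
  have hLpos : 0 < L := abs_pos.mpr (ne_of_lt hlog2r_neg)
  have hlog2r : Real.log (2*r) = Real.log 2 + Real.log r :=
    Real.log_mul (by norm_num) (ne_of_gt hr)
  have hinvr : (4:ℝ) ≤ 1/r := by
    rw [le_div_iff₀ hr]; linarith
  have hlog4 : Real.log 4 ≤ -Real.log r := by
    have := Real.log_le_log (by norm_num : (0:ℝ) < 4) hinvr
    rwa [one_div, Real.log_inv] at this
  have hlog2 : Real.log 2 ≤ -Real.log r / 2 := by
    have h24 : Real.log 4 = 2 * Real.log 2 := by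
      rw [show (4:ℝ) = 2^2 by norm_num, Real.log_pow]; push_cast; ring
    linarith
  have hhalfL : -Real.log r / 2 ≤ L := by
    rw [hL, hlog2r]; linarith
  -- smallness of lam r
  have habs : |Real.log r| = -Real.log r := abs_of_neg hlogr_neg
  have hsmall : lam r / |Real.log r| < 1/2 := hδ ⟨by
    simpa [Real.dist_eq, abs_of_pos hr] using hrδ, hr⟩
  have hlamr0 : 0 ≤ lam r := hlam_nonneg r hrmem
  have hlamr : lam r ≤ -Real.log r / 2 := by
    rw [habs] at hsmall
    have hlr : 0 < -Real.log r := by linarith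
    rw [div_lt_iff₀ hlr] at hsmall
    linarith
  set a : ℝ := lam r / L with hadef
  have ha0 : 0 ≤ a := div_nonneg hlamr0 hLpos.le
  have haL : a * L = lam r := div_mul_cancel₀ _ (ne_of_gt hLpos)
  have ha1 : a ≤ 1 := by
    rw [hadef, div_le_one hLpos]; linarith
  -- membership in Ω
  have hx₁Ω : x₁ ∈ Ω := hball (Metric.ball_subset_ball (by linarith) hx₁)
  have hx₂Ω : x₂ ∈ Ω := hball (Metric.ball_subset_ball (by linarith) hx₂)
  have hd2r : dist x₁ x₂ < 2*r := by
    have h1 : dist x₁ x₀ < r := Metric.mem_ball.mp hx₁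
    have h2 : dist x₀ x₂ < r := by
      rw [dist_comm]; exact Metric.mem_ball.mp hx₂
    calc dist x₁ x₂ ≤ dist x₁ x₀ + dist x₀ x₂ := dist_triangle _ _ _
      _ < 2*r := by linarith
  -- exponent oscillation bound
  have hbound : |pe x₁ - pe x₂| ≤ a ∧ |qe x₁ - qe x₂| ≤ a := by
    rcases eq_or_lt_of_le (dist_nonneg : (0:ℝ) ≤ dist x₁ x₂) with h0 | h0
    · have hx : x₁ = x₂ := dist_eq_zero.mp h0.symm
      subst hx
      simp [ha0]
    · have hdmem : dist x₁ x₂ ∈ Set.Ioo (0:ℝ) rstar := ⟨h0, lt_trans hd2r h2rstar⟩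
      have hh := hholder x₁ hx₁Ω x₂ hx₂Ω h0 (lt_trans hd2r h2rstar)
      have hmono := hlam_mono hdmem h2rmem (le_of_lt hd2r)
      simp only at hmono
      have hanti : lam (2*r) ≤ lam r := hlam_anti hrmem h2rmem (by linarith)
      have h2 : lam (2*r) / L ≤ a := by
        rw [hadef]
        exact div_le_div_of_nonneg_right hanti hLpos.le
      have hsum : |pe x₁ - pe x₂| + |qe x₁ - qe x₂| ≤ a := by
        calc |pe x₁ - pe x₂| + |qe x₁ - qe x₂|
            ≤ lam (dist x₁ x₂) / |Real.log (dist x₁ x₂)| := hh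
          _ ≤ lam (2*r) / |Real.log (2*r)| := hmono
          _ ≤ a := h2
      constructor
      · have := abs_nonneg (qe x₁ - qe x₂); linarith
      · have := abs_nonneg (pe x₁ - pe x₂); linarith
  -- bound (K/r)^a
  set A : ℝ := Real.exp |Real.log (2*K)| * Real.exp (lam r) with hAdef
  have hKrpos : 0 < K / r := div_pos hK hr
  have hKra : (K / r) ^ a ≤ A := by
    rw [Real.rpow_def_of_pos hKrpos, hAdef, ← Real.exp_add]
    apply Real.exp_le_exp.mpr
    have hlogKr : Real.log (K / r) = Real.log (2*K) - Real.log (2*r) := by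
      rw [Real.log_div (ne_of_gt hK) (ne_of_gt hr),
        Real.log_mul (by norm_num) (ne_of_gt hK),
        Real.log_mul (by norm_num) (ne_of_gt hr)]
      ring
    rw [hlogKr]
    have h1 : a * Real.log (2*K) ≤ |Real.log (2*K)| := by
      calc a * Real.log (2*K) ≤ a * |Real.log (2*K)| :=
            mul_le_mul_of_nonneg_left (le_abs_self _) ha0
        _ ≤ 1 * |Real.log (2*K)| :=
            mul_le_mul_of_nonneg_right ha1 (abs_nonneg _)
        _ = |Real.log (2*K)| := one_mul _
    have h2 : a * (-Real.log (2*r)) = lam r := by rw [← hL]; exact haL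
    nlinarith [h1, h2]
  -- conclude
  set t : ℝ := v / r with htdef
  have ht1 : 1 ≤ t := (one_le_div hr).mpr hrv
  have htT : t ≤ K / r := by
    rw [htdef]; exact div_le_div_of_nonneg_right hvK hr.le
  have hApos : 0 < A := mul_pos (Real.exp_pos _) (Real.exp_pos _)
  have hP := aux_rpow t (K/r) A (pe x₁ - 1) (pe x₂ - 1) a ht1 htT
    (by simpa using hbound.1) hKra
  have hQ := aux_rpow t (K/r) A (qe x₁ - 1) (qe x₂ - 1) a ht1 htT
    (by simpa using hbound.2) hKra
  calc t ^ (pe x₁ - 1) + t ^ (qe x₁ - 1)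
      ≤ A * t ^ (pe x₂ - 1) + A * t ^ (qe x₂ - 1) := add_le_add hP hQ
    _ = Real.exp |Real.log (2*K)| * Real.exp (lam r) *
        (t ^ (pe x₂ - 1) + t ^ (qe x₂ - 1)) := by rw [hAdef]; ring
end

section
/- Let n ≥ 1, let Ω ⊂ ℝⁿ be a bounded open set, and let r* ∈ (0,1). Let λ : (0,r*) → [0,∞) be continuous and nonincreasing such that r ↦ r^α·e^{λ(r)} is nondecreasing on (0,r*) and r^α·e^{λ(r)} → 0 as r → 0⁺. Let 1 < p < q, let 0 < q − p ≤ α ≤ 1, let A > 0, and let a : Ω → [0,∞) satisfy |a(x)−a(y)| ≤ A·|x−y|^α·e^{λ(|x−y|)} for all x, y ∈ Ω with 0 < |x−y| < r*. Define g(x,v) := v^(p−1) + a(x)·v^(q−1). Then for every K ≥ 1 there exist r₀ ∈ (0, r*/2) and c₂ > 0 such that for every x₀ ∈ ℝⁿ, every r ∈ (0, r₀] with the ball B_{8r}(x₀) contained in Ω, all x₁, x₂ ∈ B_r(x₀), and every v with r ≤ v ≤ K: g(x₁, v/r) ≤ c₂·e^{λ(r)}·g(x₂, v/r). -/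
/-!
For `x₁, x₂ ∈ B_r(x₀)` we have `|x₁ - x₂| < 2r`, so monotonicity of `ρ ↦ ρ^α e^{λ(ρ)}` and
antitonicity of `λ` bound the oscillation of `a` by `A 2^α r^α e^{λ(r)}`. Multiplied by
`(v/r)^(q-1)`, this excess is absorbed into `(v/r)^(p-1)`: since `q - p ≤ α` and `r ≤ 1`,
`r^α (v/r)^(q-p) ≤ v^(q-p) ≤ K^(q-p)`.
-/

open Real

lemma rpow_mul_exp_le_of_lt_two_mul {lam : ℝ → ℝ} {α rstar d r : ℝ}
    (hlam_anti : AntitoneOn lam (Set.Ioo 0 rstar))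
    (hlam_mono : MonotoneOn (fun r => r ^ α * exp (lam r)) (Set.Ioo 0 rstar))
    (hd : 0 < d) (hdr : d < 2 * r) (hr : 2 * r < rstar) :
    d ^ α * exp (lam d) ≤ 2 ^ α * r ^ α * exp (lam r) := by
  have hr0 : 0 < r := by linarith
  have hr_mem : r ∈ Set.Ioo 0 rstar := ⟨hr0, by linarith⟩
  have h2r_mem : 2 * r ∈ Set.Ioo 0 rstar := ⟨by linarith, hr⟩
  calc d ^ α * exp (lam d) ≤ (2 * r) ^ α * exp (lam (2 * r)) :=
        hlam_mono ⟨hd, hdr.trans hr⟩ h2r_mem hdr.le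
    _ = 2 ^ α * r ^ α * exp (lam (2 * r)) := by rw [mul_rpow zero_le_two hr0.le]
    _ ≤ 2 ^ α * r ^ α * exp (lam r) := by
        gcongr
        exact hlam_anti hr_mem h2r_mem (by linarith)

lemma le_add_of_dist_lt_two_mul {X : Type*} [MetricSpace X] {a : X → ℝ} {Ω : Set X}
    {lam : ℝ → ℝ} {α rstar A r : ℝ} {x y : X}
    (hlam_anti : AntitoneOn lam (Set.Ioo 0 rstar))
    (hlam_mono : MonotoneOn (fun r => r ^ α * exp (lam r)) (Set.Ioo 0 rstar))
    (hA : 0 ≤ A)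
    (hholder : ∀ x ∈ Ω, ∀ y ∈ Ω, 0 < dist x y → dist x y < rstar →
      |a x - a y| ≤ A * dist x y ^ α * exp (lam (dist x y)))
    (hx : x ∈ Ω) (hy : y ∈ Ω) (hxy : dist x y < 2 * r) (hr : 2 * r < rstar) :
    a x ≤ a y + exp (lam r) * (A * 2 ^ α * r ^ α) := by
  rcases eq_or_ne x y with rfl | hne
  · have hr0 : 0 < r := by linarith [dist_nonneg (x := x) (y := x)]
    have : 0 ≤ exp (lam r) * (A * 2 ^ α * r ^ α) := by positivity
    linarith
  have hd : 0 < dist x y := dist_pos.2 hne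
  have hosc := (abs_le.1 (hholder x hx y hy hd (hxy.trans hr))).2
  have hmod := rpow_mul_exp_le_of_lt_two_mul hlam_anti hlam_mono hd hxy hr
  nlinarith

lemma rpow_mul_rpow_add_le {r w K s t α : ℝ} (hr0 : 0 ≤ r) (hr1 : r ≤ 1) (hw : 0 < w)
    (hrw : r * w ≤ K) (hs : 0 ≤ s) (hsα : s ≤ α) :
    r ^ α * w ^ (s + t) ≤ K ^ s * w ^ t := by
  rw [rpow_add hw, ← mul_assoc]
  gcongr
  calc r ^ α * w ^ s ≤ r ^ s * w ^ s :=
        mul_le_mul_of_nonneg_right (rpow_le_rpow_of_exponent_ge' hr0 hr1 hs hsα) (by positivity)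
    _ = (r * w) ^ s := (mul_rpow hr0 hw.le).symm
    _ ≤ K ^ s := by gcongr

lemma add_mul_le_mul_add_mul {P Q a₁ a₂ E δ M : ℝ} (hP : 0 ≤ P) (hQ : 0 ≤ Q) (ha₂ : 0 ≤ a₂)
    (hE : 1 ≤ E) (hM : 0 ≤ M) (ha : a₁ ≤ a₂ + E * δ) (hδ : δ * Q ≤ M * P) :
    P + a₁ * Q ≤ (1 + M) * E * (P + a₂ * Q) := by
  have hg : 0 ≤ P + a₂ * Q := by positivity
  calc P + a₁ * Q ≤ P + a₂ * Q + E * (δ * Q) := by nlinarith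
    _ ≤ P + a₂ * Q + E * (M * P) := by gcongr
    _ ≤ E * (P + a₂ * Q) + E * (M * (P + a₂ * Q)) := by
        gcongr
        · exact le_mul_of_one_le_left hg hE
        · exact le_add_of_nonneg_right (by positivity)
    _ = (1 + M) * E * (P + a₂ * Q) := by ring

theorem condition_g3_double_phase_general
    (n : ℕ)
    (Ω : Set (EuclideanSpace ℝ (Fin n)))
    (rstar : ℝ) (hrstar : rstar ∈ Set.Ioo (0:ℝ) 1)
    (lam : ℝ → ℝ) (α : ℝ)
    (hlam_nonneg : ∀ r ∈ Set.Ioo (0:ℝ) rstar, 0 ≤ lam r)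
    (hlam_anti : AntitoneOn lam (Set.Ioo 0 rstar))
    (hlam_mono : MonotoneOn (fun r => r ^ α * Real.exp (lam r)) (Set.Ioo 0 rstar))
    (p q : ℝ)
    (hα₁ : 0 < q - p) (hα₂ : q - p ≤ α)
    (A : ℝ) (hA : 0 < A)
    (a : EuclideanSpace ℝ (Fin n) → ℝ) (ha_nonneg : ∀ x ∈ Ω, 0 ≤ a x)
    (hholder : ∀ x ∈ Ω, ∀ y ∈ Ω, 0 < dist x y → dist x y < rstar →
      |a x - a y| ≤ A * dist x y ^ α * Real.exp (lam (dist x y))) :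
    ∀ K : ℝ, 1 ≤ K → ∃ r₀ : ℝ, 0 < r₀ ∧ r₀ < rstar / 2 ∧ ∃ c₂ > (0:ℝ),
      ∀ x₀ : EuclideanSpace ℝ (Fin n), ∀ r : ℝ, 0 < r → r ≤ r₀ →
        Metric.ball x₀ (8 * r) ⊆ Ω →
        ∀ x₁ ∈ Metric.ball x₀ r, ∀ x₂ ∈ Metric.ball x₀ r,
          ∀ v : ℝ, r ≤ v → v ≤ K →
            (v / r) ^ (p - 1) + a x₁ * (v / r) ^ (q - 1) ≤
              c₂ * Real.exp (lam r) *
                ((v / r) ^ (p - 1) + a x₂ * (v / r) ^ (q - 1)) := by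
  intro K hK
  obtain ⟨hrstar0, hrstar1⟩ := hrstar
  refine ⟨rstar / 4, by linarith, by linarith, 1 + A * 2 ^ α * K ^ (q - p), by positivity, ?_⟩
  intro x₀ r hr hrr₀ hball x₁ hx₁ x₂ hx₂ v hrv hvK
  have hx₁Ω : x₁ ∈ Ω := hball (Metric.ball_subset_ball (by linarith) hx₁)
  have hx₂Ω : x₂ ∈ Ω := hball (Metric.ball_subset_ball (by linarith) hx₂)
  have hx₁₂ : dist x₁ x₂ < 2 * r := by
    linarith [dist_triangle_right x₁ x₂ x₀, Metric.mem_ball.1 hx₁, Metric.mem_ball.1 hx₂]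
  have hosc := le_add_of_dist_lt_two_mul hlam_anti hlam_mono hA.le hholder hx₁Ω hx₂Ω hx₁₂
    (by linarith)
  have hw : 0 < v / r := div_pos (hr.trans_le hrv) hr
  have hpow : r ^ α * (v / r) ^ ((q - p) + (p - 1)) ≤ K ^ (q - p) * (v / r) ^ (p - 1) :=
    rpow_mul_rpow_add_le hr.le (by linarith) hw (by rwa [mul_div_cancel₀ v hr.ne']) hα₁.le hα₂
  rw [sub_add_sub_cancel] at hpow
  refine add_mul_le_mul_add_mul (by positivity) (by positivity) (ha_nonneg x₂ hx₂Ω)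
    (one_le_exp (hlam_nonneg r ⟨hr, by linarith⟩)) (by positivity) hosc ?_
  calc A * 2 ^ α * r ^ α * (v / r) ^ (q - 1) = A * 2 ^ α * (r ^ α * (v / r) ^ (q - 1)) := by ring
    _ ≤ A * 2 ^ α * (K ^ (q - p) * (v / r) ^ (p - 1)) := by gcongr
    _ = A * 2 ^ α * K ^ (q - p) * (v / r) ^ (p - 1) := by ring

/-- The non-logarithmic continuity condition (g₃) for the double-phase model
`g(x,v) = v^(p−1) + a(x)·v^(q−1)`, under the non-log modulus-of-continuity
assumption `|a(x)−a(y)| ≤ A·|x−y|^α·e^{λ(|x−y|)}`. -/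
theorem condition_g3_double_phase
    (n : ℕ) (hn : 1 ≤ n)
    (Ω : Set (EuclideanSpace ℝ (Fin n)))
    (hΩ_open : IsOpen Ω) (hΩ_bdd : Bornology.IsBounded Ω)
    (rstar : ℝ) (hrstar : rstar ∈ Set.Ioo (0:ℝ) 1)
    (lam : ℝ → ℝ) (α : ℝ)
    (hlam_cont : ContinuousOn lam (Set.Ioo 0 rstar))
    (hlam_nonneg : ∀ r ∈ Set.Ioo (0:ℝ) rstar, 0 ≤ lam r)
    (hlam_anti : AntitoneOn lam (Set.Ioo 0 rstar))
    (hlam_mono : MonotoneOn (fun r => r ^ α * Real.exp (lam r)) (Set.Ioo 0 rstar))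
    (hlam_lim : Filter.Tendsto (fun r => r ^ α * Real.exp (lam r))
      (nhdsWithin 0 (Set.Ioi 0)) (nhds 0))
    (p q : ℝ) (hp : 1 < p) (hpq : p < q)
    (hα₁ : 0 < q - p) (hα₂ : q - p ≤ α) (hα₃ : α ≤ 1)
    (A : ℝ) (hA : 0 < A)
    (a : EuclideanSpace ℝ (Fin n) → ℝ) (ha_nonneg : ∀ x ∈ Ω, 0 ≤ a x)
    (hholder : ∀ x ∈ Ω, ∀ y ∈ Ω, 0 < dist x y → dist x y < rstar →
      |a x - a y| ≤ A * dist x y ^ α * Real.exp (lam (dist x y))) :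
    ∀ K : ℝ, 1 ≤ K → ∃ r₀ : ℝ, 0 < r₀ ∧ r₀ < rstar / 2 ∧ ∃ c₂ > (0:ℝ),
      ∀ x₀ : EuclideanSpace ℝ (Fin n), ∀ r : ℝ, 0 < r → r ≤ r₀ →
        Metric.ball x₀ (8 * r) ⊆ Ω →
        ∀ x₁ ∈ Metric.ball x₀ r, ∀ x₂ ∈ Metric.ball x₀ r,
          ∀ v : ℝ, r ≤ v → v ≤ K →
            (v / r) ^ (p - 1) + a x₁ * (v / r) ^ (q - 1) ≤
              c₂ * Real.exp (lam r) *
                ((v / r) ^ (p - 1) + a x₂ * (v / r) ^ (q - 1)) :=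
  condition_g3_double_phase_general n Ω rstar hrstar lam α hlam_nonneg hlam_anti hlam_mono p q hα₁
    hα₂ A hA a ha_nonneg hholder
end

section
/- Let n ≥ 1, let Ω ⊂ ℝⁿ be a bounded open set, and let r* ∈ (0,1). Let λ : (0,r*) → [0,∞) be continuous and nonincreasing such that r ↦ e^{λ(r)}/|ln r| is nondecreasing on (0,r*) and e^{λ(r)}/|ln r| → 0 as r → 0⁺. Let p > 1, B > 0, and let b : Ω → [0,∞) satisfy |b(x)−b(y)| ≤ B·e^{λ(|x−y|)}/|ln|x−y|| for all x, y ∈ Ω with 0 < |x−y| < r*. Define g(x,v) := v^(p−1)·(1 + b(x)·ln(1+v)). Then for every K ≥ 1 there exist r₀ ∈ (0, r*/2) and c₂ > 0 such that for every x₀ ∈ ℝⁿ, every r ∈ (0, r₀] with the ball B_{8r}(x₀) contained in Ω, all x₁, x₂ ∈ B_r(x₀), and every v with r ≤ v ≤ K: g(x₁, v/r) ≤ c₂·e^{λ(r)}·g(x₂, v/r). -/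
set_option maxHeartbeats 1000000


/-- The non-logarithmic continuity condition (g₃) for the logarithmically perturbed
model `g(x,v) = v^(p−1)·(1 + b(x)·ln(1+v))`, under the non-log modulus-of-continuity
assumption `|b(x)−b(y)| ≤ B·e^{λ(|x−y|)}/|ln|x−y||`. -/
theorem condition_g3_log_perturbed
    (n : ℕ) (hn : 1 ≤ n)
    (Ω : Set (EuclideanSpace ℝ (Fin n)))
    (hΩ_open : IsOpen Ω) (hΩ_bdd : Bornology.IsBounded Ω)
    (rstar : ℝ) (hrstar : rstar ∈ Set.Ioo (0:ℝ) 1)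
    (lam : ℝ → ℝ)
    (hlam_cont : ContinuousOn lam (Set.Ioo 0 rstar))
    (hlam_nonneg : ∀ r ∈ Set.Ioo (0:ℝ) rstar, 0 ≤ lam r)
    (hlam_anti : AntitoneOn lam (Set.Ioo 0 rstar))
    (hlam_mono : MonotoneOn (fun r => Real.exp (lam r) / |Real.log r|) (Set.Ioo 0 rstar))
    (hlam_lim : Filter.Tendsto (fun r => Real.exp (lam r) / |Real.log r|)
      (nhdsWithin 0 (Set.Ioi 0)) (nhds 0))
    (p : ℝ) (hp : 1 < p)
    (B : ℝ) (hB : 0 < B)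
    (b : EuclideanSpace ℝ (Fin n) → ℝ) (hb_nonneg : ∀ x ∈ Ω, 0 ≤ b x)
    (hholder : ∀ x ∈ Ω, ∀ y ∈ Ω, 0 < dist x y → dist x y < rstar →
      |b x - b y| ≤ B * Real.exp (lam (dist x y)) / |Real.log (dist x y)|) :
    ∀ K : ℝ, 1 ≤ K → ∃ r₀ : ℝ, 0 < r₀ ∧ r₀ < rstar / 2 ∧ ∃ c₂ > (0:ℝ),
      ∀ x₀ : EuclideanSpace ℝ (Fin n), ∀ r : ℝ, 0 < r → r ≤ r₀ →
        Metric.ball x₀ (8 * r) ⊆ Ω →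
        ∀ x₁ ∈ Metric.ball x₀ r, ∀ x₂ ∈ Metric.ball x₀ r,
          ∀ v : ℝ, r ≤ v → v ≤ K →
            (v / r) ^ (p - 1) * (1 + b x₁ * Real.log (1 + v / r)) ≤
              c₂ * Real.exp (lam r) *
                ((v / r) ^ (p - 1) * (1 + b x₂ * Real.log (1 + v / r))) := by

  obtain ⟨hrs0, hrs1⟩ := hrstar
  intro K hK
  have hlK : 0 ≤ Real.log (2 * K) := Real.log_nonneg (by linarith)
  have hC0 : 0 ≤ 2 * B * (Real.log (2 * K) + 1) :=
    mul_nonneg (by linarith) (by linarith)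
  refine ⟨rstar / 4, by linarith, by linarith,
    1 + 2 * B * (Real.log (2 * K) + 1), by linarith, ?_⟩
  intro x₀ r hr hr0 hsub x₁ hx₁ x₂ hx₂ v hvr hvK
  set C := 2 * B * (Real.log (2 * K) + 1) with hCdef
  set E := Real.exp (lam r) with hEdef
  set L := Real.log (1 + v / r) with hLdef
  set W := (v / r) ^ (p - 1) with hWdef
  have hr14 : r < 1 / 4 := by linarith
  have hrrs : r < rstar := by linarith
  have h2rrs : 2 * r < rstar := by linarith
  -- memberships in Ω
  have hΩ₁ : x₁ ∈ Ω := hsub (Metric.ball_subset_ball (by linarith) hx₁)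
  have hΩ₂ : x₂ ∈ Ω := hsub (Metric.ball_subset_ball (by linarith) hx₂)
  have hb₂0 : 0 ≤ b x₂ := hb_nonneg x₂ hΩ₂
  have hw1 : 1 ≤ v / r := (one_le_div hr).mpr hvr
  have hL0 : 0 ≤ L := Real.log_nonneg (by linarith)
  have hW0 : 0 < W := Real.rpow_pos_of_pos (by linarith) _
  have hE1 : 1 ≤ E := Real.one_le_exp (hlam_nonneg r ⟨hr, hrrs⟩)
  -- logs of r
  have hlnr : Real.log r < 0 := Real.log_neg hr (by linarith)
  have hlog2 : (0.6931471803 : ℝ) < Real.log 2 := Real.log_two_gt_d9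
  have hlogr_le : Real.log r ≤ -(2 * Real.log 2) := by
    have h14 : Real.log r ≤ Real.log (1 / 4) := by gcongr <;> linarith
    have hlog14 : Real.log (1 / 4 : ℝ) = -(2 * Real.log 2) := by
      rw [show (1 / 4 : ℝ) = (2 ^ 2)⁻¹ by norm_num, Real.log_inv, Real.log_pow]
      push_cast; ring
    linarith
  have hA1 : 1 ≤ -Real.log r := by linarith
  -- the key difference bound multiplied by L
  have hbdL : |b x₁ - b x₂| * L ≤ C * E := by
    rcases eq_or_lt_of_le (dist_nonneg : (0:ℝ) ≤ dist x₁ x₂) with h0 | hd0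
    · have hx12 : x₁ = x₂ := dist_eq_zero.mp h0.symm
      rw [hx12, sub_self, abs_zero, zero_mul]
      exact mul_nonneg hC0 (by linarith)
    · have hd2r : dist x₁ x₂ < 2 * r := by
        have h1 := Metric.mem_ball.mp hx₁
        have h2 := Metric.mem_ball.mp hx₂
        have h3 := dist_triangle x₁ x₀ x₂
        rw [dist_comm x₀ x₂] at h3
        linarith
      have hdrs : dist x₁ x₂ < rstar := by linarith
      have hhol := hholder x₁ hΩ₁ x₂ hΩ₂ hd0 hdrs
      have hmono : Real.exp (lam (dist x₁ x₂)) / |Real.log (dist x₁ x₂)| ≤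
          Real.exp (lam (2 * r)) / |Real.log (2 * r)| :=
        hlam_mono ⟨hd0, hdrs⟩ ⟨by linarith, h2rrs⟩ hd2r.le
      have hanti : lam (2 * r) ≤ lam r :=
        hlam_anti ⟨hr, hrrs⟩ ⟨by linarith, h2rrs⟩ (by linarith)
      have hexp2r : Real.exp (lam (2 * r)) ≤ E := Real.exp_le_exp.mpr hanti
      have hln2r : Real.log (2 * r) = Real.log 2 + Real.log r :=
        Real.log_mul (by norm_num) (ne_of_gt hr)
      have hln2r_neg : Real.log (2 * r) < 0 :=
        Real.log_neg (by linarith) (by linarith)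
      have habs2r : |Real.log (2 * r)| = -Real.log (2 * r) := abs_of_neg hln2r_neg
      have hkey : -Real.log r ≤ 2 * (-Real.log (2 * r)) := by
        rw [hln2r]; linarith
      -- exp(lam 2r)/|log 2r| ≤ 2*E/(-log r)
      have hstep : Real.exp (lam (2 * r)) / |Real.log (2 * r)| ≤
          2 * E / (-Real.log r) := by
        rw [habs2r, div_le_div_iff₀ (by linarith) (by linarith)]
        have hE0 : 0 < E := Real.exp_pos _
        nlinarith [Real.exp_pos (lam (2 * r))]
      have hbd : |b x₁ - b x₂| ≤ 2 * B * E / (-Real.log r) := by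
        have h1 : B * Real.exp (lam (dist x₁ x₂)) / |Real.log (dist x₁ x₂)| ≤
            B * (2 * E / (-Real.log r)) := by
          rw [mul_div_assoc]
          exact mul_le_mul_of_nonneg_left (le_trans hmono hstep) hB.le
        calc |b x₁ - b x₂| ≤ _ := hhol
          _ ≤ B * (2 * E / (-Real.log r)) := h1
          _ = 2 * B * E / (-Real.log r) := by ring
      have hXA : |b x₁ - b x₂| * (-Real.log r) ≤ 2 * B * E :=
        (le_div_iff₀ (by linarith)).mp hbd
      -- L ≤ log(2K) + (-log r)
      have hLbd : L ≤ Real.log (2 * K) + (-Real.log r) := by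
        have h1 : (1 : ℝ) + v / r ≤ 2 * K / r := by
          have hKr : (1 : ℝ) ≤ K / r := (one_le_div hr).mpr (by linarith)
          have hvK' : v / r ≤ K / r := by gcongr
          have : 2 * K / r = K / r + K / r := by ring
          linarith
        have h2 : L ≤ Real.log (2 * K / r) := by
          rw [hLdef]
          gcongr
        have h3 : Real.log (2 * K / r) = Real.log (2 * K) - Real.log r :=
          Real.log_div (by positivity) (ne_of_gt hr)
        linarith
      have hX0 : 0 ≤ |b x₁ - b x₂| := abs_nonneg _
      have hE0 : 0 < E := Real.exp_pos _
      nlinarith [mul_le_mul_of_nonneg_left hLbd hX0,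
        mul_le_mul_of_nonneg_right hXA hlK,
        mul_nonneg (mul_nonneg hX0 (by linarith : (0:ℝ) ≤ -Real.log r - 1)) hlK,
        mul_nonneg hB.le hE0.le]
  -- assemble
  have hb1 : b x₁ ≤ b x₂ + |b x₁ - b x₂| := by
    have := le_abs_self (b x₁ - b x₂); linarith
  have hmain : 1 + b x₁ * L ≤ (1 + C) * E * (1 + b x₂ * L) := by
    have h1 : b x₁ * L ≤ b x₂ * L + |b x₁ - b x₂| * L := by
      linarith [mul_le_mul_of_nonneg_right hb1 hL0]
    have hb2L : 0 ≤ b x₂ * L := mul_nonneg hb₂0 hL0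
    nlinarith [mul_nonneg (by linarith : (0:ℝ) ≤ E - 1) hb2L,
      mul_nonneg (mul_nonneg hC0 (by linarith : (0:ℝ) ≤ E)) hb2L]
  calc W * (1 + b x₁ * L) ≤ W * ((1 + C) * E * (1 + b x₂ * L)) :=
        mul_le_mul_of_nonneg_left hmain hW0.le
    _ = (1 + C) * E * (W * (1 + b x₂ * L)) := by ring
end

section
/- Let Ω be a set, let 1 < p, let q̄ < q be real numbers, and let p(·) : Ω → ℝ satisfy p ≤ p(x) ≤ q̄ for all x ∈ Ω. Define g(x,v) := v^(p(x)−1)·(1 + ln(1+v)) for v > 0. Then (i) for every x ∈ Ω and all w ≥ v > 0 one has g(x,w)/g(x,v) ≥ (w/v)^(p−1); and (ii) there exists a constant c₁ > 0, depending only on q − q̄, such that for every x ∈ Ω and all w ≥ v > 0 one has g(x,w)/g(x,v) ≤ c₁·(w/v)^(q−1). In other words, g satisfies condition (g₂) with exponent p and condition (g₁) with b₀ = 0 and exponent q. -/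
/-- The variable-exponent logarithmic model `g(x,v) = v^(p(x)−1)·(1 + ln(1+v))` with
`1 < p ≤ p(x) ≤ q̄ < q` satisfies condition (g₂) with exponent `p`, and condition (g₁)
with `b₀ = 0`, exponent `q` and a constant `c₁ > 0`. -/
theorem variable_exponent_log_model_g1_g2
    {Ω : Type*} (p qbar q : ℝ) (hp : 1 < p) (hq : qbar < q)
    (pe : Ω → ℝ) (hpe : ∀ x : Ω, p ≤ pe x ∧ pe x ≤ qbar) :
    (∀ x : Ω, ∀ v w : ℝ, 0 < v → v ≤ w →
      (w / v) ^ (p - 1) ≤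
        (w ^ (pe x - 1) * (1 + Real.log (1 + w))) /
          (v ^ (pe x - 1) * (1 + Real.log (1 + v)))) ∧
    (∃ c₁ > (0:ℝ), ∀ x : Ω, ∀ v w : ℝ, 0 < v → v ≤ w →
      (w ^ (pe x - 1) * (1 + Real.log (1 + w))) /
          (v ^ (pe x - 1) * (1 + Real.log (1 + v))) ≤
        c₁ * (w / v) ^ (q - 1)) := by
  have hε : 0 < q - qbar := by linarith
  constructor
  · intro x v w hv hvw
    have hw : 0 < w := lt_of_lt_of_le hv hvw
    have he : p - 1 ≤ pe x - 1 := by have := (hpe x).1; linarith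
    have ht1 : 1 ≤ w / v := (one_le_div hv).mpr hvw
    have hLv : (0:ℝ) < 1 + Real.log (1 + v) := by
      have : (0:ℝ) ≤ Real.log (1 + v) := Real.log_nonneg (by linarith)
      linarith
    have hLw : Real.log (1 + v) ≤ Real.log (1 + w) :=
      Real.log_le_log (by linarith) (by linarith)
    have hve : 0 < v ^ (pe x - 1) := Real.rpow_pos_of_pos hv _
    have hwe : 0 < w ^ (pe x - 1) := Real.rpow_pos_of_pos hw _
    calc (w/v)^(p-1) ≤ (w/v)^(pe x - 1) := Real.rpow_le_rpow_of_exponent_le ht1 he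
      _ = w^(pe x - 1) / v^(pe x - 1) := Real.div_rpow hw.le hv.le _
      _ ≤ _ := by
          rw [div_le_div_iff₀ hve (by positivity)]
          nlinarith [mul_pos hwe hve]
  · refine ⟨1 + 1/(q - qbar), by positivity, ?_⟩
    intro x v w hv hvw
    have hw : 0 < w := lt_of_lt_of_le hv hvw
    set t := w / v with htdef
    have ht1 : 1 ≤ t := (one_le_div hv).mpr hvw
    have ht0 : 0 < t := by linarith
    have hLv : (0:ℝ) < 1 + Real.log (1 + v) := by
      have : (0:ℝ) ≤ Real.log (1 + v) := Real.log_nonneg (by linarith)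
      linarith
    have hLw : (0:ℝ) < 1 + Real.log (1 + w) := by
      have : (0:ℝ) ≤ Real.log (1 + w) := Real.log_nonneg (by linarith)
      linarith
    have hlog : Real.log (1 + w) ≤ Real.log t + Real.log (1 + v) := by
      have h1 : (1:ℝ) + w ≤ t * (1 + v) := by
        rw [htdef, div_mul_eq_mul_div, le_div_iff₀ hv]
        nlinarith
      calc Real.log (1 + w) ≤ Real.log (t * (1 + v)) :=
            Real.log_le_log (by linarith) h1
        _ = Real.log t + Real.log (1 + v) := Real.log_mul (ne_of_gt ht0) (by linarith)
    have hlogt : 0 ≤ Real.log t := Real.log_nonneg ht1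
    have hratio : (1 + Real.log (1 + w)) ≤ (1 + Real.log (1 + v)) * (1 + Real.log t) := by
      nlinarith [Real.log_nonneg (show (1:ℝ) ≤ 1 + v by linarith)]
    have htε : 1 ≤ t ^ (q - qbar) := Real.one_le_rpow ht1 hε.le
    have hkey : 1 + Real.log t ≤ (1 + 1/(q - qbar)) * t ^ (q - qbar) := by
      have h2 : Real.log (t ^ (q - qbar)) ≤ t ^ (q - qbar) - 1 :=
        Real.log_le_sub_one_of_pos (Real.rpow_pos_of_pos ht0 _)
      rw [Real.log_rpow ht0] at h2
      rw [show (1 + 1/(q - qbar)) = (q - qbar + 1)/(q - qbar) by field_simp,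
        div_mul_eq_mul_div, le_div_iff₀ hε]
      nlinarith [mul_nonneg hε.le (show (0:ℝ) ≤ t ^ (q - qbar) - 1 by linarith)]
    have hve : 0 < v ^ (pe x - 1) := Real.rpow_pos_of_pos hv _
    have hwe : 0 < w ^ (pe x - 1) := Real.rpow_pos_of_pos hw _
    have h1 : w ^ (pe x - 1) / v ^ (pe x - 1) ≤ t ^ (qbar - 1) := by
      rw [← Real.div_rpow hw.le hv.le]
      exact Real.rpow_le_rpow_of_exponent_le ht1 (by linarith [(hpe x).2])
    have hmul : t ^ (qbar - 1) * t ^ (q - qbar) = t ^ (q - 1) := by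
      rw [← Real.rpow_add ht0]; ring_nf
    calc (w ^ (pe x - 1) * (1 + Real.log (1 + w))) /
          (v ^ (pe x - 1) * (1 + Real.log (1 + v)))
        = (w ^ (pe x - 1) / v ^ (pe x - 1)) *
          ((1 + Real.log (1 + w)) / (1 + Real.log (1 + v))) := by
          field_simp
      _ ≤ t ^ (qbar - 1) * (1 + Real.log t) := by
          apply mul_le_mul h1 ?_ (div_nonneg hLw.le hLv.le) (Real.rpow_nonneg ht0.le _)
          rw [div_le_iff₀ hLv]
          nlinarith
      _ ≤ t ^ (qbar - 1) * ((1 + 1/(q - qbar)) * t ^ (q - qbar)) :=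
          mul_le_mul_of_nonneg_left hkey (Real.rpow_nonneg ht0.le _)
      _ = (1 + 1/(q - qbar)) * t ^ (q - 1) := by rw [← hmul]; ring
end

section
/- Let n ≥ 1, let Ω ⊂ ℝⁿ be a bounded open set, and let r* ∈ (0,1). Let λ : (0,r*) → [0,∞) be continuous and nonincreasing such that r ↦ λ(r)/|ln r| is nondecreasing on (0,r*) and λ(r)/|ln r| → 0 as r → 0⁺. Let 1 < p < q and let p(·) : Ω → ℝ satisfy p < p(x) < q for all x ∈ Ω and |p(x)−p(y)| ≤ λ(|x−y|)/|ln|x−y|| for all x, y ∈ Ω with 0 < |x−y| < r*. Define g(x,v) := v^(p(x)−1)·(1 + ln(1+v)). Then for every K > 0 there exist r₀ ∈ (0, r*/2) and c₂ > 0 such that for every x₀ ∈ ℝⁿ, every r ∈ (0, r₀] with the ball B_{8r}(x₀) contained in Ω, all x₁, x₂ ∈ B_r(x₀), and every v with r ≤ v ≤ K: g(x₁, v/r) ≤ c₂·e^{λ(r)}·g(x₂, v/r). -/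
/-- The non-logarithmic continuity condition (g₃) for the variable-exponent
logarithmic model `g(x,v) = v^(p(x)−1)·(1 + ln(1+v))`, under the non-log
modulus-of-continuity assumption on `p(·)`. -/
theorem condition_g3_variable_exponent_log_model
    (n : ℕ) (hn : 1 ≤ n)
    (Ω : Set (EuclideanSpace ℝ (Fin n)))
    (hΩ_open : IsOpen Ω) (hΩ_bdd : Bornology.IsBounded Ω)
    (rstar : ℝ) (hrstar : rstar ∈ Set.Ioo (0:ℝ) 1)
    (lam : ℝ → ℝ)
    (hlam_cont : ContinuousOn lam (Set.Ioo 0 rstar))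
    (hlam_nonneg : ∀ r ∈ Set.Ioo (0:ℝ) rstar, 0 ≤ lam r)
    (hlam_anti : AntitoneOn lam (Set.Ioo 0 rstar))
    (hlam_mono : MonotoneOn (fun r => lam r / |Real.log r|) (Set.Ioo 0 rstar))
    (hlam_lim : Filter.Tendsto (fun r => lam r / |Real.log r|)
      (nhdsWithin 0 (Set.Ioi 0)) (nhds 0))
    (p q : ℝ) (hp : 1 < p) (hpq : p < q)
    (pe : EuclideanSpace ℝ (Fin n) → ℝ)
    (hrange : ∀ x ∈ Ω, p < pe x ∧ pe x < q)
    (hholder : ∀ x ∈ Ω, ∀ y ∈ Ω, 0 < dist x y → dist x y < rstar →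
      |pe x - pe y| ≤ lam (dist x y) / |Real.log (dist x y)|) :
    ∀ K > (0:ℝ), ∃ r₀ : ℝ, 0 < r₀ ∧ r₀ < rstar / 2 ∧ ∃ c₂ > (0:ℝ),
      ∀ x₀ : EuclideanSpace ℝ (Fin n), ∀ r : ℝ, 0 < r → r ≤ r₀ →
        Metric.ball x₀ (8 * r) ⊆ Ω →
        ∀ x₁ ∈ Metric.ball x₀ r, ∀ x₂ ∈ Metric.ball x₀ r,
          ∀ v : ℝ, r ≤ v → v ≤ K →
            (v / r) ^ (pe x₁ - 1) * (1 + Real.log (1 + v / r)) ≤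
              c₂ * Real.exp (lam r) *
                ((v / r) ^ (pe x₂ - 1) * (1 + Real.log (1 + v / r))) := by
  intro K hK
  obtain ⟨hrs0, hrs1⟩ := hrstar
  refine ⟨rstar / 4, by linarith, by linarith,
    Real.exp ((q - p) * (Real.log 2 + max 0 (Real.log K))), Real.exp_pos _, ?_⟩
  intro x₀ r hr hrr₀ hball x₁ hx₁ x₂ hx₂ v hrv hvK
  have hr1 : r < 1 := by linarith
  have hx₁Ω : x₁ ∈ Ω := hball (Metric.ball_subset_ball (by linarith) hx₁)
  have hx₂Ω : x₂ ∈ Ω := hball (Metric.ball_subset_ball (by linarith) hx₂)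
  have hrmem : r ∈ Set.Ioo (0:ℝ) rstar := ⟨hr, by linarith⟩
  have h2rmem : (2*r) ∈ Set.Ioo (0:ℝ) rstar := ⟨by linarith, by linarith⟩
  have hlamr : 0 ≤ lam r := hlam_nonneg r hrmem
  set t := v / r with ht
  have ht1 : (1:ℝ) ≤ t := (le_div_iff₀ hr).mpr (by linarith)
  have ht0 : (0:ℝ) < t := lt_of_lt_of_le one_pos ht1
  have hlogt0 : 0 ≤ Real.log t := Real.log_nonneg ht1
  have hlogr : Real.log r < 0 := Real.log_neg hr hr1
  have hlog2r : Real.log (2*r) < 0 := Real.log_neg (by linarith) (by linarith)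
  have hlog2r_eq : Real.log (2*r) = Real.log 2 + Real.log r :=
    Real.log_mul two_ne_zero (ne_of_gt hr)
  have hlog2 : (0:ℝ) ≤ Real.log 2 := Real.log_nonneg one_le_two
  have hmax0 : (0:ℝ) ≤ max 0 (Real.log K) := le_max_left _ _
  have habs : |pe x₁ - pe x₂| ≤ q - p := by
    obtain ⟨h1, h2⟩ := hrange x₁ hx₁Ω
    obtain ⟨h3, h4⟩ := hrange x₂ hx₂Ω
    rw [abs_le]; constructor <;> linarith
  have hlogt : Real.log t ≤ max 0 (Real.log K) + (-Real.log r) := by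
    have h1 : Real.log t ≤ Real.log (K / r) := by
      apply Real.log_le_log ht0
      show v / r ≤ K / r
      gcongr
    rw [Real.log_div (ne_of_gt hK) (ne_of_gt hr)] at h1
    have : Real.log K ≤ max 0 (Real.log K) := le_max_right _ _
    linarith
  have hkey : |pe x₁ - pe x₂| * Real.log t ≤
      (q - p) * (Real.log 2 + max 0 (Real.log K)) + lam r := by
    rcases eq_or_ne x₁ x₂ with heq | hne
    · have : |pe x₁ - pe x₂| = 0 := by rw [heq]; simp
      rw [this, zero_mul]
      have h0 : 0 ≤ (q - p) * (Real.log 2 + max 0 (Real.log K)) :=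
        mul_nonneg (by linarith) (by linarith)
      linarith
    · have hd0 : 0 < dist x₁ x₂ := dist_pos.mpr hne
      have hd2r : dist x₁ x₂ < 2 * r := by
        have h1 : dist x₁ x₀ < r := Metric.mem_ball.mp hx₁
        have h2 : dist x₂ x₀ < r := Metric.mem_ball.mp hx₂
        calc dist x₁ x₂ ≤ dist x₁ x₀ + dist x₀ x₂ := dist_triangle _ _ _
          _ = dist x₁ x₀ + dist x₂ x₀ := by rw [dist_comm x₀ x₂]
          _ < 2 * r := by linarith
      have hdmem : dist x₁ x₂ ∈ Set.Ioo (0:ℝ) rstar := ⟨hd0, by linarith⟩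
      have h1 := hholder x₁ hx₁Ω x₂ hx₂Ω hd0 (by linarith)
      have h2 := hlam_mono hdmem h2rmem (le_of_lt hd2r)
      have h3 : lam (2*r) ≤ lam r := hlam_anti hrmem h2rmem (by linarith)
      have hδ : |pe x₁ - pe x₂| ≤ lam (2*r) / |Real.log (2*r)| := h1.trans h2
      have hpos2r : 0 < |Real.log (2*r)| := abs_pos.mpr (ne_of_lt hlog2r)
      have hδ' : |pe x₁ - pe x₂| * |Real.log (2*r)| ≤ lam (2*r) :=
        (le_div_iff₀ hpos2r).mp hδ
      have habs2r : |Real.log (2*r)| = -(Real.log 2 + Real.log r) := by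
        rw [abs_of_neg hlog2r, hlog2r_eq]
      rw [habs2r] at hδ'
      have habsnn : 0 ≤ |pe x₁ - pe x₂| := abs_nonneg _
      have step1 : |pe x₁ - pe x₂| * Real.log t ≤
          |pe x₁ - pe x₂| * (max 0 (Real.log K) + (-Real.log r)) :=
        mul_le_mul_of_nonneg_left hlogt habsnn
      have s2 : |pe x₁ - pe x₂| * max 0 (Real.log K) ≤ (q - p) * max 0 (Real.log K) :=
        mul_le_mul_of_nonneg_right habs hmax0
      have s3 : |pe x₁ - pe x₂| * Real.log 2 ≤ (q - p) * Real.log 2 :=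
        mul_le_mul_of_nonneg_right habs hlog2
      nlinarith [step1, s2, s3, hδ', h3]
  have hrpow : t ^ (pe x₁ - pe x₂) ≤
      Real.exp ((q - p) * (Real.log 2 + max 0 (Real.log K))) * Real.exp (lam r) := by
    rw [← Real.exp_add, Real.rpow_def_of_pos ht0]
    apply Real.exp_le_exp.mpr
    calc Real.log t * (pe x₁ - pe x₂) = (pe x₁ - pe x₂) * Real.log t := by ring
      _ ≤ |pe x₁ - pe x₂| * Real.log t :=
        mul_le_mul_of_nonneg_right (le_abs_self _) hlogt0
      _ ≤ _ := hkey
  have hA : 0 ≤ t ^ (pe x₂ - 1) * (1 + Real.log (1 + t)) := by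
    apply mul_nonneg (le_of_lt (Real.rpow_pos_of_pos ht0 _))
    have : 0 ≤ Real.log (1 + t) := Real.log_nonneg (by linarith)
    linarith
  have hsplit : t ^ (pe x₁ - 1) = t ^ (pe x₂ - 1) * t ^ (pe x₁ - pe x₂) := by
    rw [← Real.rpow_add ht0]; ring_nf
  calc t ^ (pe x₁ - 1) * (1 + Real.log (1 + t))
      = t ^ (pe x₁ - pe x₂) * (t ^ (pe x₂ - 1) * (1 + Real.log (1 + t))) := by
        rw [hsplit]; ring
    _ ≤ (Real.exp ((q - p) * (Real.log 2 + max 0 (Real.log K))) * Real.exp (lam r)) *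
        (t ^ (pe x₂ - 1) * (1 + Real.log (1 + t))) :=
        mul_le_mul_of_nonneg_right hrpow hA
end

section
/- Let n ≥ 2 be an integer, let γ ≥ 1 and λ ≥ 0 be real numbers, and set s_j := (n/(n−1))^(j+1) for j = 0, 1, 2, …. Let (y_j)_{j≥0} be a sequence of nonnegative real numbers satisfying y₀ ≤ γ·e^{λ} and y_{j+1} ≤ γ^{n/(n−1)} · 2^{jγn/(n−1)} · s_j^{n/(n−1)} · e^{2nλ/(n−1)} · y_j^{n/(n−1)} for all j ≥ 0. Then there exists a constant γ′ > 0, depending only on n and γ, such that y_j^{1/s_j} ≤ γ′·e^{(2n−1)λ} for all j ≥ 0. -/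
/-!
With `κ = n/(n-1)` the recursion reads `y_{j+1} ≤ (a_j y_j)^κ` for
`a_j = γ 2^{jγ} κ^{j+1} e^{2λ}`, so iterating gives
`y_j^{κ^{-j}} ≤ y_0 ∏_{i<j} a_i^{κ^{-i}}`. As `log a_i ≤ (i+1) log (γ 2^γ κ) + 2λ`, and
`∑ κ^{-i} = n`, `∑ (i+1) κ^{-i} = n²`, the product is at most `(γ 2^γ κ)^{n²} e^{2nλ}` uniformly
in `j`. One more root `1/κ` turns the total exponent `(2n+1)λ` of `e` into
`(2n+1)(n-1)λ/n ≤ (2n-1)λ`.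
-/

open Real Finset

theorem hasSum_pow_mul_succ_mul_add {r : ℝ} (hr₀ : 0 ≤ r) (hr₁ : r < 1) (L M : ℝ) :
    HasSum (fun i : ℕ ↦ r ^ i * ((i + 1) * L + M)) (L / (1 - r) ^ 2 + M / (1 - r)) := by
  have hnorm : ‖r‖ < 1 := by rwa [Real.norm_of_nonneg hr₀]
  have hsum := ((hasSum_coe_mul_geometric_of_norm_lt_one hnorm).mul_right L).add
    ((hasSum_geometric_of_lt_one hr₀ hr₁).mul_right (L + M))
  have hr : 1 - r ≠ 0 := by linarith
  rw [show L / (1 - r) ^ 2 + M / (1 - r) = r / (1 - r) ^ 2 * L + (1 - r)⁻¹ * (L + M) by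
    field_simp; ring]
  have hterm : (fun i : ℕ ↦ i * r ^ i * L + r ^ i * (L + M)) =
      fun i : ℕ ↦ r ^ i * ((i + 1) * L + M) := funext fun i ↦ by ring
  exact hterm ▸ hsum

theorem rpow_inv_pow_le_mul_prod {κ : ℝ} (hκ : 0 < κ) {z a : ℕ → ℝ} (hz : ∀ j, 0 ≤ z j)
    (ha : ∀ j, 0 ≤ a j) (hstep : ∀ j, z (j + 1) ≤ (a j * z j) ^ κ) (j : ℕ) :
    z j ^ (κ⁻¹ ^ j) ≤ z 0 * ∏ i ∈ range j, a i ^ (κ⁻¹ ^ i) := by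
  induction j with
  | zero => simp
  | succ j ih =>
    calc z (j + 1) ^ (κ⁻¹ ^ (j + 1))
        ≤ ((a j * z j) ^ κ) ^ (κ⁻¹ ^ (j + 1)) :=
          rpow_le_rpow (hz _) (hstep j) (by positivity)
      _ = a j ^ (κ⁻¹ ^ j) * z j ^ (κ⁻¹ ^ j) := by
          rw [← rpow_mul (mul_nonneg (ha j) (hz j)), pow_succ', ← mul_assoc,
            mul_inv_cancel₀ hκ.ne', one_mul, mul_rpow (ha j) (hz j)]
      _ ≤ a j ^ (κ⁻¹ ^ j) * (z 0 * ∏ i ∈ range j, a i ^ (κ⁻¹ ^ i)) :=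
          mul_le_mul_of_nonneg_left ih (rpow_nonneg (ha j) _)
      _ = z 0 * ∏ i ∈ range (j + 1), a i ^ (κ⁻¹ ^ i) := by rw [prod_range_succ]; ring

theorem prod_rpow_pow_le_exp {r L M : ℝ} (hr₀ : 0 ≤ r) (hr₁ : r < 1) (hL : 0 ≤ L) (hM : 0 ≤ M)
    {a : ℕ → ℝ} (ha : ∀ i, 0 < a i) (hlog : ∀ i : ℕ, log (a i) ≤ (i + 1) * L + M) (j : ℕ) :
    ∏ i ∈ range j, a i ^ (r ^ i) ≤ exp (L / (1 - r) ^ 2 + M / (1 - r)) := by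
  calc ∏ i ∈ range j, a i ^ (r ^ i)
      = exp (∑ i ∈ range j, log (a i) * r ^ i) := by
        rw [exp_sum]; exact prod_congr rfl fun i _ ↦ rpow_def_of_pos (ha i) _
    _ ≤ exp (∑ i ∈ range j, r ^ i * ((i + 1) * L + M)) := by
        refine exp_le_exp.2 (sum_le_sum fun i _ ↦ ?_)
        rw [mul_comm (r ^ i)]
        exact mul_le_mul_of_nonneg_right (hlog i) (pow_nonneg hr₀ i)
    _ ≤ exp (L / (1 - r) ^ 2 + M / (1 - r)) := by
        refine exp_le_exp.2 (sum_le_hasSum _ (fun i _ ↦ ?_) (hasSum_pow_mul_succ_mul_add hr₀ hr₁ L M))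
        positivity

noncomputable def moserFactor (γ κ lam : ℝ) (j : ℕ) : ℝ :=
  γ * 2 ^ ((j : ℝ) * γ) * κ ^ (j + 1) * exp (2 * lam)

theorem moserFactor_pos {γ κ : ℝ} (hγ : 0 < γ) (hκ : 0 < κ) (lam : ℝ) (j : ℕ) :
    0 < moserFactor γ κ lam j := by
  unfold moserFactor; positivity

theorem mul_moserFactor_rpow {γ κ y : ℝ} (hγ : 0 ≤ γ) (hκ : 0 ≤ κ) (hy : 0 ≤ y) (lam : ℝ)
    (j : ℕ) :
    (moserFactor γ κ lam j * y) ^ κ =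
      γ ^ κ * 2 ^ ((j : ℝ) * γ * κ) * (κ ^ (j + 1)) ^ κ * exp (2 * lam * κ) * y ^ κ := by
  unfold moserFactor
  rw [mul_rpow (by positivity) hy, mul_rpow (by positivity) (exp_pos _).le,
    mul_rpow (by positivity) (by positivity), mul_rpow hγ (by positivity),
    ← rpow_mul zero_le_two, ← exp_mul]

theorem log_moserFactor_le {γ κ : ℝ} (hγ : 1 ≤ γ) (hκ : 0 < κ) (lam : ℝ) (j : ℕ) :
    log (moserFactor γ κ lam j) ≤ (j + 1) * log (γ * 2 ^ γ * κ) + 2 * lam := by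
  have hγ₀ : 0 < γ := by linarith
  unfold moserFactor
  rw [log_mul (by positivity) (exp_pos _).ne', log_mul (by positivity) (by positivity),
    log_mul hγ₀.ne' (by positivity), log_rpow two_pos, log_pow, log_exp,
    log_mul (by positivity) hκ.ne', log_mul hγ₀.ne' (by positivity), log_rpow two_pos]
  have : 0 ≤ (j : ℝ) * log γ := mul_nonneg j.cast_nonneg (log_nonneg hγ)
  have : 0 ≤ γ * log 2 := mul_nonneg hγ₀.le (log_nonneg one_le_two)
  push_cast
  linarith

theorem rpow_inv_pow_le_of_le_mul_moserFactor_rpow {γ κ lam : ℝ} (hγ : 1 ≤ γ) (hκ : 1 < κ)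
    (hlam : 0 ≤ lam) {y : ℕ → ℝ} (hy : ∀ j, 0 ≤ y j) (hy₀ : y 0 ≤ γ * exp lam)
    (hstep : ∀ j, y (j + 1) ≤ (moserFactor γ κ lam j * y j) ^ κ) (j : ℕ) :
    y j ^ (κ⁻¹ ^ j) ≤
      γ * exp (log (γ * 2 ^ γ * κ) / (1 - κ⁻¹) ^ 2) * exp ((1 + 2 / (1 - κ⁻¹)) * lam) := by
  have hγ₀ : 0 < γ := by linarith
  have hκ₀ : 0 < κ := by linarith
  have hL : 0 ≤ log (γ * 2 ^ γ * κ) := log_nonneg <| one_le_mul_of_one_le_of_one_le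
    (one_le_mul_of_one_le_of_one_le hγ (one_le_rpow one_le_two hγ₀.le)) hκ.le
  have ha := moserFactor_pos hγ₀ hκ₀ lam
  calc y j ^ (κ⁻¹ ^ j)
      ≤ y 0 * ∏ i ∈ range j, moserFactor γ κ lam i ^ (κ⁻¹ ^ i) :=
        rpow_inv_pow_le_mul_prod hκ₀ hy (fun i ↦ (ha i).le) hstep j
    _ ≤ γ * exp lam * exp (log (γ * 2 ^ γ * κ) / (1 - κ⁻¹) ^ 2 + 2 * lam / (1 - κ⁻¹)) := by
        refine mul_le_mul hy₀ ?_ (prod_nonneg fun i _ ↦ (rpow_pos_of_pos (ha i) _).le)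
          (by positivity)
        exact prod_rpow_pow_le_exp (by positivity) (inv_lt_one_of_one_lt₀ hκ) hL (by positivity)
          ha (log_moserFactor_le hγ hκ₀ lam) j
    _ = γ * exp (log (γ * 2 ^ γ * κ) / (1 - κ⁻¹) ^ 2) * exp ((1 + 2 / (1 - κ⁻¹)) * lam) := by
        simp only [mul_assoc, ← exp_add]
        ring_nf

/-- Moser-type iteration lemma (Lemma 2.2 of the paper): with `s_j = (n/(n−1))^(j+1)`,
a nonnegative sequence with `y₀ ≤ γ·e^λ` and
`y_{j+1} ≤ γ^{n/(n−1)}·2^{jγn/(n−1)}·s_j^{n/(n−1)}·e^{2nλ/(n−1)}·y_j^{n/(n−1)}`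
satisfies `y_j^{1/s_j} ≤ γ′·e^{(2n−1)λ}` for a constant `γ′ > 0` depending only on
`n` and `γ`. -/
theorem moser_iteration_lemma
    (n : ℕ) (hn : 2 ≤ n) (γ : ℝ) (hγ : 1 ≤ γ) :
    ∃ γ' > (0:ℝ), ∀ lam : ℝ, 0 ≤ lam → ∀ y : ℕ → ℝ,
      (∀ j, 0 ≤ y j) →
      y 0 ≤ γ * Real.exp lam →
      (∀ j : ℕ, y (j + 1) ≤
        γ ^ ((n : ℝ) / ((n : ℝ) - 1)) *
          2 ^ ((j : ℝ) * γ * (n : ℝ) / ((n : ℝ) - 1)) *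
          (((n : ℝ) / ((n : ℝ) - 1)) ^ (j + 1)) ^ ((n : ℝ) / ((n : ℝ) - 1)) *
          Real.exp (2 * (n : ℝ) * lam / ((n : ℝ) - 1)) *
          y j ^ ((n : ℝ) / ((n : ℝ) - 1))) →
      ∀ j : ℕ, y j ^ (1 / (((n : ℝ) / ((n : ℝ) - 1)) ^ (j + 1))) ≤
        γ' * Real.exp ((2 * (n : ℝ) - 1) * lam) := by
  have hn₁ : (1 : ℝ) < n := by exact_mod_cast hn
  set κ : ℝ := n / (n - 1) with hκ
  have hκ₁ : 1 < κ := (one_lt_div (by linarith)).2 (by linarith)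
  have hκn : 1 - κ⁻¹ = (n : ℝ)⁻¹ := by rw [hκ, inv_div]; field_simp; ring
  set C := γ * exp (log (γ * 2 ^ γ * κ) / (1 - κ⁻¹) ^ 2)
  refine ⟨C ^ κ⁻¹, by positivity, fun lam hlam y hy hy₀ hrec j ↦ ?_⟩
  have hstep (j : ℕ) : y (j + 1) ≤ (moserFactor γ κ lam j * y j) ^ κ := by
    rw [mul_moserFactor_rpow (by linarith) (by linarith) (hy j)]
    have h := hrec j
    rwa [show (j : ℝ) * γ * n / (n - 1) = j * γ * κ by rw [hκ]; ring,
      show 2 * (n : ℝ) * lam / (n - 1) = 2 * lam * κ by rw [hκ]; ring] at h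
  have hbound := rpow_inv_pow_le_of_le_mul_moserFactor_rpow hγ hκ₁ hlam hy hy₀ hstep j
  calc y j ^ (1 / κ ^ (j + 1)) = (y j ^ (κ⁻¹ ^ j)) ^ κ⁻¹ := by
        rw [← rpow_mul (hy j), ← pow_succ, one_div, inv_pow]
    _ ≤ (C * exp ((1 + 2 / (1 - κ⁻¹)) * lam)) ^ κ⁻¹ :=
        rpow_le_rpow (rpow_nonneg (hy j) _) hbound (by positivity)
    _ = C ^ κ⁻¹ * exp ((2 * n + 1) * lam * κ⁻¹) := by
        rw [mul_rpow (by positivity) (by positivity), ← exp_mul, hκn, div_inv_eq_mul]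
        congr 2; ring
    _ ≤ C ^ κ⁻¹ * exp ((2 * n - 1) * lam) := by
        refine mul_le_mul_of_nonneg_left (exp_le_exp.2 ?_) (by positivity)
        rw [hκ, inv_div, mul_div_assoc', div_le_iff₀ (by linarith)]
        nlinarith
end
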